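/- Let η : ℝ → ℝ be defined for 0 < r < π/2 by η(r) = c₁ · (1 − cos(r)^(2/3))^(1/2) · (cos(r)^(2/3) + cos(r)^(4/3) + 1)^(−1/4) · exp(−(√3/2) · arctan((2·cos(r)^(2/3) + 1)/√3)), where c₁ = 3^(3/4) · e^(π/(2√3)). Then (π/2 − r)^(1/3) · η'(r) → 3^(3/4) · e^(π/(4√3)) as r → (π/2)⁻; in particular η'(r) → +∞ as r → (π/2)⁻. -/

import Mathlib

/-!
With `u = cos r ^ (2/3)` one has `η r = c₁ F(u)`, where `F = etaProfile` satisfies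
`F' / F = -3 / (2 (1 - u³))`; since `1 - u³ = sin² r`, the chain rule gives
`η' = η / (sin r · cos r ^ (1/3))`. Writing `cos r = (π/2 - r) · sinc (π/2 - r)`, the product
`(π/2 - r)^(1/3) η'(r)` becomes `c₁ F(u) / (sin r · sinc (π/2 - r) ^ (1/3))`, which is continuous
at `π/2` with value `c₁ F(0) = 3^(3/4) e^(π/(4√3))`. As `(π/2 - r)^(1/3) → 0⁺`, `η'` tends to `+∞`.
-/

/-- The constant `c₁ = 3^(3/4) e^(π/(2√3))` of Lemma 2.4 of Gilkey–Park. -/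
noncomputable def c₁ : ℝ := (3 : ℝ) ^ ((3 : ℝ) / 4) * Real.exp (Real.pi / (2 * Real.sqrt 3))

/-- The reparametrized radial distance function `η` of Lemma 2.4 of Gilkey–Park on `CP²`. -/
noncomputable def η (r : ℝ) : ℝ :=
  c₁ * (1 - Real.cos r ^ ((2 : ℝ) / 3)) ^ ((1 : ℝ) / 2)
    * (Real.cos r ^ ((2 : ℝ) / 3) + Real.cos r ^ ((4 : ℝ) / 3) + 1) ^ (-(1 : ℝ) / 4)
    * Real.exp (-(Real.sqrt 3 / 2)
        * Real.arctan ((2 * Real.cos r ^ ((2 : ℝ) / 3) + 1) / Real.sqrt 3))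

open Real Filter Topology

lemma sin_eq_mul_sinc (x : ℝ) : sin x = x * sinc x := by
  by_cases hx : x = 0
  · simp [hx]
  · rw [sinc_of_ne_zero hx]
    field_simp

lemma tendsto_sub_rpow_nhdsLT (a : ℝ) {p : ℝ} (hp : 0 < p) :
    Tendsto (fun r => (a - r) ^ p) (𝓝[<] a) (𝓝[>] 0) := by
  refine tendsto_nhdsWithin_iff.2 ⟨?_, ?_⟩
  · have h : ContinuousAt (fun r => (a - r) ^ p) a :=
      (continuousAt_const.sub continuousAt_id).rpow_const (Or.inr hp.le)
    simpa [zero_rpow hp.ne'] using h.tendsto.mono_left nhdsWithin_le_nhds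
  · filter_upwards [self_mem_nhdsWithin] with r hr using rpow_pos_of_pos (sub_pos.2 hr) p

lemma tendsto_atTop_of_tendsto_mul_pos {α : Type*} {l : Filter α} {f g : α → ℝ} {L : ℝ}
    (hL : 0 < L) (hg : Tendsto g l (𝓝[>] 0)) (hgf : Tendsto (fun x => g x * f x) l (𝓝 L)) :
    Tendsto f l atTop := by
  refine (hgf.pos_mul_atTop hL hg.inv_tendsto_nhdsGT_zero).congr' ?_
  filter_upwards [hg self_mem_nhdsWithin] with x (hx : 0 < g x)
  simp only [Pi.inv_apply, ← div_eq_mul_inv]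
  exact mul_div_cancel_left₀ (f x) hx.ne'

noncomputable def etaProfile (u : ℝ) : ℝ :=
  (1 - u) ^ ((1 : ℝ) / 2) * (u + u ^ 2 + 1) ^ (-(1 : ℝ) / 4)
    * exp (-(√3 / 2) * arctan ((2 * u + 1) / √3))

lemma η_eq_c₁_mul_etaProfile {r : ℝ} (hr : 0 ≤ cos r) :
    η r = c₁ * etaProfile (cos r ^ ((2 : ℝ) / 3)) := by
  have h : cos r ^ ((4 : ℝ) / 3) = (cos r ^ ((2 : ℝ) / 3)) ^ 2 := by
    rw [← rpow_natCast, ← rpow_mul hr]; norm_num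
  simp only [η, etaProfile, h]
  ring

lemma c₁_mul_etaProfile_zero : c₁ * etaProfile 0 = 3 ^ ((3 : ℝ) / 4) * exp (π / (4 * √3)) := by
  have harctan : arctan (√3)⁻¹ = π / 6 := by
    rw [← one_div, ← tan_pi_div_six, arctan_tan] <;> linarith [pi_pos]
  simp only [c₁, etaProfile]
  norm_num [harctan]
  rw [mul_assoc, ← exp_add]
  congr 2
  field_simp
  linear_combination (-4) * mul_self_sqrt (zero_le_three (α := ℝ))

lemma hasDerivAt_etaProfile {u : ℝ} (hu : u < 1) :
    HasDerivAt etaProfile (-3 * etaProfile u / (2 * (1 - u ^ 3))) u := by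
  have hP : 0 < 1 - u := by linarith
  have hQ : 0 < u + u ^ 2 + 1 := by nlinarith [sq_nonneg (2 * u + 1)]
  have hA : HasDerivAt (fun x => (1 - x) ^ ((1 : ℝ) / 2))
      (-1 * (1 / 2) * (1 - u) ^ ((1 : ℝ) / 2 - 1)) u :=
    ((hasDerivAt_id u).const_sub 1).rpow_const (Or.inl hP.ne')
  have hB : HasDerivAt (fun x => (x + x ^ 2 + 1) ^ (-(1 : ℝ) / 4))
      ((1 + 2 * u) * (-1 / 4) * (u + u ^ 2 + 1) ^ (-(1 : ℝ) / 4 - 1)) u := by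
    refine HasDerivAt.rpow_const ?_ (Or.inl hQ.ne')
    simpa using ((hasDerivAt_id u).add (hasDerivAt_pow 2 u)).add_const 1
  have hC : HasDerivAt (fun x => exp (-(√3 / 2) * arctan ((2 * x + 1) / √3)))
      (exp (-(√3 / 2) * arctan ((2 * u + 1) / √3)) *
        (-(√3 / 2) * (1 / (1 + ((2 * u + 1) / √3) ^ 2) * (2 / √3)))) u := by
    refine ((HasDerivAt.arctan ?_).const_mul _).exp
    simpa using (((hasDerivAt_id u).const_mul 2).add_const 1).div_const √3
  refine ((hA.mul hB).mul hC).congr_deriv ?_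
  have hdenom : 1 + ((2 * u + 1) / √3) ^ 2 = 4 * (u + u ^ 2 + 1) / 3 := by
    rw [div_pow, sq_sqrt zero_le_three]; ring
  have hcube : 1 - u ^ 3 = (1 - u) * (u + u ^ 2 + 1) := by ring
  rw [rpow_sub hP, rpow_sub hQ, rpow_one, rpow_one, hdenom, hcube]
  simp only [etaProfile, Pi.mul_apply]
  generalize hQdef : u + u ^ 2 + 1 = Q at hQ ⊢
  field_simp
  linear_combination 4 * hQdef

lemma hasDerivAt_η {r : ℝ} (h0 : 0 < r) (h1 : r < π / 2) :
    HasDerivAt η (η r / (sin r * cos r ^ ((1 : ℝ) / 3))) r := by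
  have hcos : 0 < cos r := cos_pos_of_mem_Ioo ⟨by linarith, h1⟩
  have hsin : 0 < sin r := sin_pos_of_pos_of_lt_pi h0 (by linarith)
  have hu : cos r ^ ((2 : ℝ) / 3) < 1 :=
    rpow_lt_one hcos.le (by nlinarith [sin_sq_add_cos_sq r]) (by norm_num)
  have hη : η =ᶠ[𝓝 r] fun x => c₁ * etaProfile (cos x ^ ((2 : ℝ) / 3)) := by
    filter_upwards [continuousAt_const.eventually_lt continuous_cos.continuousAt hcos]
      with x hx using η_eq_c₁_mul_etaProfile hx.le
  have hcomp := ((hasDerivAt_etaProfile hu).comp r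
    ((hasDerivAt_cos r).rpow_const (p := (2 : ℝ) / 3) (Or.inl hcos.ne'))).const_mul c₁
  refine (hcomp.congr_of_eventuallyEq hη).congr_deriv ?_
  have hcube : (cos r ^ ((2 : ℝ) / 3)) ^ 3 = 1 - sin r ^ 2 := by
    rw [← rpow_natCast, ← rpow_mul hcos.le, ← cos_sq']; norm_num
  have hexp : cos r ^ ((2 : ℝ) / 3 - 1) = (cos r ^ ((1 : ℝ) / 3))⁻¹ := by
    rw [← rpow_neg hcos.le]; norm_num
  rw [η_eq_c₁_mul_etaProfile hcos.le, hcube, hexp]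
  field_simp
  ring

lemma pi_div_two_sub_rpow_mul_deriv_η {r : ℝ} (h0 : 0 < r) (h1 : r < π / 2) :
    (π / 2 - r) ^ ((1 : ℝ) / 3) * deriv η r
      = c₁ * etaProfile (cos r ^ ((2 : ℝ) / 3)) / (sin r * sinc (π / 2 - r) ^ ((1 : ℝ) / 3)) := by
  have hcos : 0 < cos r := cos_pos_of_mem_Ioo ⟨by linarith, h1⟩
  have hx : 0 < π / 2 - r := by linarith
  have hcos_eq : cos r = (π / 2 - r) * sinc (π / 2 - r) := by
    rw [← sin_pi_div_two_sub, sin_eq_mul_sinc]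
  have hsinc : 0 < sinc (π / 2 - r) := pos_of_mul_pos_right (hcos_eq ▸ hcos) hx.le
  have hroot : cos r ^ ((1 : ℝ) / 3)
      = (π / 2 - r) ^ ((1 : ℝ) / 3) * sinc (π / 2 - r) ^ ((1 : ℝ) / 3) := by
    rw [← mul_rpow hx.le hsinc.le, ← hcos_eq]
  rw [(hasDerivAt_η h0 h1).deriv, hroot, η_eq_c₁_mul_etaProfile hcos.le]
  generalize π / 2 - r = x at *
  field_simp

lemma tendsto_pi_div_two_sub_rpow_mul_deriv_η :
    Tendsto (fun r => (π / 2 - r) ^ ((1 : ℝ) / 3) * deriv η r) (𝓝[<] (π / 2))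
      (𝓝 (3 ^ ((3 : ℝ) / 4) * exp (π / (4 * √3)))) := by
  have hnum : ContinuousAt (fun r => c₁ * etaProfile (cos r ^ ((2 : ℝ) / 3))) (π / 2) := by
    refine continuousAt_const.mul ((hasDerivAt_etaProfile ?_).continuousAt.comp
      (continuous_cos.continuousAt.rpow_const (Or.inr (by norm_num))))
    simp [zero_rpow]
  have hden : ContinuousAt (fun r => sin r * sinc (π / 2 - r) ^ ((1 : ℝ) / 3)) (π / 2) :=
    continuous_sin.continuousAt.mul ((continuous_sinc.comp (continuous_const.sub
      continuous_id)).continuousAt.rpow_const (Or.inr (by norm_num)))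
  have hlim := ((hnum.div hden (by simp)).tendsto).mono_left
    (nhdsWithin_le_nhds (s := Set.Iio (π / 2)))
  simp only [Pi.div_apply, cos_pi_div_two, sin_pi_div_two, sub_self, sinc_zero, one_rpow, mul_one,
    div_one, zero_rpow (by norm_num : (2 : ℝ) / 3 ≠ 0), c₁_mul_etaProfile_zero] at hlim
  refine hlim.congr' ?_
  filter_upwards [Ioo_mem_nhdsLT (by positivity : 0 < π / 2)] with r hr
  exact (pi_div_two_sub_rpow_mul_deriv_η hr.1 hr.2).symm

/-- Boundary asymptotics of `ψ = η'` at `r = π/2`: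
`(π/2 − r)^(1/3) η'(r) → 3^(3/4) e^(π/(4√3))`, so `η'(r) → ∞` as `r → (π/2)⁻`. -/
theorem stmt_10 :
    Filter.Tendsto (fun r => (Real.pi / 2 - r) ^ ((1 : ℝ) / 3) * deriv η r)
      (nhdsWithin (Real.pi / 2) (Set.Iio (Real.pi / 2)))
      (nhds ((3 : ℝ) ^ ((3 : ℝ) / 4) * Real.exp (Real.pi / (4 * Real.sqrt 3)))) ∧
    Filter.Tendsto (fun r => deriv η r)
      (nhdsWithin (Real.pi / 2) (Set.Iio (Real.pi / 2))) Filter.atTop :=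
  ⟨tendsto_pi_div_two_sub_rpow_mul_deriv_η, tendsto_atTop_of_tendsto_mul_pos (by positivity)
    (tendsto_sub_rpow_nhdsLT _ (by norm_num)) tendsto_pi_div_two_sub_rpow_mul_deriv_η⟩
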